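/- arXiv:1708.01196 — 10 statements merged into one kernel-verified Lean document; each statement's English description precedes it below -/
import Mathlib

section
/- Every complex bilinear form on ℂ² can be represented by a matrix of type A(p) or type B(p,q): for every 2×2 complex matrix M there exists an invertible 2×2 complex matrix G such that either Gᵀ M G = A(p) for some p ∈ ℂ, or Gᵀ M G = B(p,q) for some p, q ∈ ℂ. -/
/-!
If the form `x ↦ xᵀ M x` vanishes identically, `M` is alternating, hence already of type `A(p)`.
Otherwise pick `v` with `vᵀ M v ≠ 0`, normalised to `1` by a square root. Over an algebraically
closed field, `t ↦ (t v + u)ᵀ M (t v + u)` has a root for any `u` independent of `v`, giving an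
isotropic `w` independent of `v`; in the basis `v, w` the Gram matrix is of type `B(p, q)`.
-/

open Matrix Polynomial

theorem IsAlgClosed.exists_quadratic_eq_zero {K : Type*} [Field K] [IsAlgClosed K] {a : K}
    (b c : K) (ha : a ≠ 0) : ∃ x, a * x ^ 2 + b * x + c = 0 := by
  obtain ⟨x, hx⟩ := exists_root (C a * X ^ 2 + C b * X + C c) (by simp [degree_quadratic ha])
  exact ⟨x, by simpa using hx⟩

namespace LinearMap.BilinForm

variable {K V : Type*} [Field K] [IsAlgClosed K] [AddCommGroup V] [Module K V]
  (B : LinearMap.BilinForm K V)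

theorem exists_isotropic_linearIndependent_pair (hV : 1 < Module.finrank K V) {v : V}
    (hv : B v v ≠ 0) : ∃ w, B w w = 0 ∧ LinearIndependent K ![v, w] := by
  have hv0 : v ≠ 0 := by rintro rfl; simp at hv
  obtain ⟨u, hvu⟩ := exists_linearIndependent_pair_of_one_lt_finrank hV hv0
  obtain ⟨t, ht⟩ := IsAlgClosed.exists_quadratic_eq_zero (B v u + B u v) (B u u) hv
  -- `B (t • v + u) (t • v + u)` is a quadratic in `t` with leading coefficient `B v v ≠ 0`.
  refine ⟨t • v + u, ?_, (LinearIndependent.pair_add_smul_right_iff t).mpr hvu⟩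
  simp only [map_add, map_smul, LinearMap.add_apply, LinearMap.smul_apply, smul_eq_mul]
  linear_combination ht

theorem exists_normalized_isotropic_pair_of_not_isAlt (hV : 1 < Module.finrank K V)
    (hB : ¬ B.IsAlt) :
    ∃ v w, LinearIndependent K ![v, w] ∧ B v v = 1 ∧ B w w = 0 := by
  obtain ⟨v, hv⟩ : ∃ v, B v v ≠ 0 := by
    simpa [IsAlt, LinearMap.IsAlt] using hB
  obtain ⟨z, hz⟩ := IsAlgClosed.exists_eq_mul_self (B v v)
  have hz0 : z ≠ 0 := by rintro rfl; simp_all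
  obtain ⟨w, hw, hvw⟩ := B.exists_isotropic_linearIndependent_pair hV hv
  refine ⟨z⁻¹ • v, w, ?_, ?_, hw⟩
  · simpa using (LinearIndependent.pair_smul_smul_iff (isUnit_iff_ne_zero.mpr (inv_ne_zero hz0))
      isUnit_one).mpr hvw
  · simp only [map_smul, LinearMap.smul_apply, smul_eq_mul, hz]
    field_simp

end LinearMap.BilinForm

theorem Matrix.of_mul_mul_transpose_of {n R : Type*} [Fintype n] [CommSemiring R]
    (b : n → n → R) (M : Matrix n n R) :
    of b * M * (of b)ᵀ = of fun i j ↦ b i ⬝ᵥ M *ᵥ b j := by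
  ext i j
  simp only [mul_mul_apply, transpose_transpose, of_apply]
  rfl

theorem Matrix.eq_of_isAlt_toBilin' {R : Type*} [CommRing R] {M : Matrix (Fin 2) (Fin 2) R}
    (hM : (toBilin' M).IsAlt) : M = !![0, M 0 1; -M 0 1, 0] := by
  ext i j
  fin_cases i <;> fin_cases j
  · simpa using hM.self_eq_zero (Pi.single 0 1)
  · rfl
  · simpa using (hM.neg_eq (Pi.single 0 1) (Pi.single 1 1)).symm
  · simpa using hM.self_eq_zero (Pi.single 1 1)

/-- Every complex bilinear form on `ℂ²` can be represented by a matrix of type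
`A(p) = !![0, p; -p, 0]` or of type `B(p,q) = !![1, p; q, 0]`. -/
theorem bilinear_form_two_dim_classification (M : Matrix (Fin 2) (Fin 2) ℂ) :
    ∃ G : Matrix (Fin 2) (Fin 2) ℂ, IsUnit G.det ∧
      ((∃ p : ℂ, Gᵀ * M * G = !![0, p; -p, 0]) ∨
       (∃ p q : ℂ, Gᵀ * M * G = !![1, p; q, 0])) := by
  by_cases hM : (toBilin' M).IsAlt
  · exact ⟨1, by simp, Or.inl ⟨M 0 1, by simpa using eq_of_isAlt_toBilin' hM⟩⟩
  obtain ⟨v, w, hvw, hv, hw⟩ :=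
    LinearMap.BilinForm.exists_normalized_isotropic_pair_of_not_isAlt _ (by simp) hM
  rw [toBilin'_apply'] at hv hw
  refine ⟨(of ![v, w])ᵀ, ?_, Or.inr ⟨v ⬝ᵥ M *ᵥ w, w ⬝ᵥ M *ᵥ v, ?_⟩⟩
  · rw [det_transpose, ← isUnit_iff_isUnit_det]
    exact linearIndependent_rows_iff_isUnit.mp hvw
  · rw [transpose_transpose, of_mul_mul_transpose_of, ← hv, ← hw]
    ext i j
    fin_cases i <;> fin_cases j <;> rfl
end

section
/- For all p, q ∈ ℂ, the matrix B(p,q) is congruent to B(q,p): there exists an invertible 2×2 complex matrix G with Gᵀ B(p,q) G = B(q,p). -/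
open Matrix

/- In the basis `e₁, s • e₁ - e₂` the bilinear form of `B(p,q)` has Gram matrix
`!![1, s - p; s - q, s * (s - p - q)]`; the choice `s = p + q` turns it into `B(q,p)`. -/

theorem transpose_mul_mul_swap_eq {R : Type*} [CommRing R] (p q : R) :
    (!![1, p + q; 0, -1] : Matrix (Fin 2) (Fin 2) R)ᵀ * !![1, p; q, 0] * !![1, p + q; 0, -1] =
      !![1, q; p, 0] := by
  rw [eta_fin_two (Matrix.transpose _)]
  simp only [transpose_apply, of_apply, cons_val', cons_val_zero, cons_val_one, empty_val',
    cons_val_fin_one, mul_fin_two]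
  ring_nf

/-- `B(p,q) = !![1, p; q, 0]` is congruent to `B(q,p)`. -/
theorem B_congruent_swap (p q : ℂ) :
    ∃ G : Matrix (Fin 2) (Fin 2) ℂ, IsUnit G.det ∧
      Gᵀ * !![1, p; q, 0] * G = !![1, q; p, 0] :=
  ⟨!![1, p + q; 0, -1], by simp [det_fin_two_of], transpose_mul_mul_swap_eq p q⟩
end

section
/- For all p, q, x, y ∈ ℂ, the matrix B(p,q) is congruent to B(x,y) if and only if there exists c ∈ ℂ with c ≠ 0 such that (x,y) = (cp, cq) or (x,y) = (cq, cp). That is, B(p,q) ≅ B(x,y) iff (p:q) = (x:y) or (p:q) = (y:x) as points of ℙ¹ (including the generic point (0:0)), so the stratum B(p:q) is parametrized by ℙ¹/Σ₂. -/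
/-!
Write `G = !![a, b; c, d]`. The bottom-right entry of `Gᵀ B(p,q) G` is `b (b + (p + q) d)`, so
a congruence onto some `B(x,y)` has either `b = 0`, in which case `(x, y) = ad (p, q)`, or
`b = -(p + q) d`, in which case `(x, y) = -det G (q, p)`. Conversely `diag(1, c)` realises the
scaling and `!![1, c(p+q); 0, -c]` the scaled swap.
-/

open Matrix

def Matrix.Congruent {n R : Type*} [Fintype n] [DecidableEq n] [CommRing R]
    (M N : Matrix n n R) : Prop :=
  ∃ G : Matrix n n R, IsUnit G.det ∧ Gᵀ * M * G = N

section

variable {R : Type*} [CommRing R]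

def bMat (p q : R) : Matrix (Fin 2) (Fin 2) R := !![1, p; q, 0]

theorem transpose_mul_bMat_mul (p q a b c d : R) :
    !![a, b; c, d]ᵀ * bMat p q * !![a, b; c, d] =
      !![a * (a + (p + q) * c), a * b + p * a * d + q * c * b;
        a * b + p * c * b + q * a * d, b * (b + (p + q) * d)] := by
  have hT : !![a, b; c, d]ᵀ = !![a, c; b, d] := (transposeᵣ_eq _).symm
  rw [hT, bMat, mul_fin_two, mul_fin_two]
  ring_nf

theorem bMat_congruent_smul {c : R} (hc : IsUnit c) (p q : R) :
    (bMat p q).Congruent (bMat (c * p) (c * q)) := by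
  refine ⟨!![1, 0; 0, c], by simpa using hc, ?_⟩
  rw [transpose_mul_bMat_mul, bMat]
  ring_nf

theorem bMat_congruent_smul_swap {c : R} (hc : IsUnit c) (p q : R) :
    (bMat p q).Congruent (bMat (c * q) (c * p)) := by
  refine ⟨!![1, c * (p + q); 0, -c], by simpa using hc, ?_⟩
  rw [transpose_mul_bMat_mul, bMat]
  ring_nf

end

theorem exists_smul_of_bMat_congruent {K : Type*} [Field K] {p q x y : K}
    (h : (bMat p q).Congruent (bMat x y)) :
    ∃ c : K, c ≠ 0 ∧ ((x = c * p ∧ y = c * q) ∨ (x = c * q ∧ y = c * p)) := by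
  obtain ⟨G, hdet, hG⟩ := h
  obtain ⟨a, b, c, d, rfl⟩ : ∃ a b c d : K, G = !![a, b; c, d] := ⟨_, _, _, _, G.eta_fin_two⟩
  rw [det_fin_two_of, isUnit_iff_ne_zero] at hdet
  rw [transpose_mul_bMat_mul, bMat] at hG
  have hx := congrFun₂ hG 0 1
  have hy := congrFun₂ hG 1 0
  have hb := congrFun₂ hG 1 1
  simp only [of_apply, cons_val', cons_val_zero, cons_val_one, empty_val', cons_val_fin_one]
    at hx hy hb
  rcases mul_eq_zero.mp hb with rfl | hb
  · refine ⟨a * d, by simpa using hdet, Or.inl ⟨?_, ?_⟩⟩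
    · linear_combination -hx
    · linear_combination -hy
  · refine ⟨-(a * d - b * c), neg_ne_zero.mpr hdet, Or.inr ⟨?_, ?_⟩⟩
    · linear_combination -hx + a * hb
    · linear_combination -hy + a * hb

theorem bMat_congruent_iff {K : Type*} [Field K] (p q x y : K) :
    (bMat p q).Congruent (bMat x y) ↔
      ∃ c : K, c ≠ 0 ∧ ((x = c * p ∧ y = c * q) ∨ (x = c * q ∧ y = c * p)) := by
  refine ⟨exists_smul_of_bMat_congruent, ?_⟩
  rintro ⟨c, hc, ⟨rfl, rfl⟩ | ⟨rfl, rfl⟩⟩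
  · exact bMat_congruent_smul hc.isUnit p q
  · exact bMat_congruent_smul_swap hc.isUnit p q

/-- `B(p,q)` is congruent to `B(x,y)` iff `(x,y) = (cp, cq)` or `(x,y) = (cq, cp)` for some
nonzero scalar `c`; so the stratum `B(p:q)` is parametrized by `ℙ¹/Σ₂`. -/
theorem B_congruent_iff (p q x y : ℂ) :
    (∃ G : Matrix (Fin 2) (Fin 2) ℂ, IsUnit G.det ∧
      Gᵀ * !![1, p; q, 0] * G = !![1, x; y, 0]) ↔
    (∃ c : ℂ, c ≠ 0 ∧ ((x = c * p ∧ y = c * q) ∨ (x = c * q ∧ y = c * p))) :=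
  bMat_congruent_iff p q x y
end

section
/- For every λ ∈ ℂ with λ ≠ 0, λ ≠ 1, and λ ≠ −1, the matrix H₁(λ) = !![0, 1; λ, 0] is congruent to B(λ, 1): there exists an invertible 2×2 complex matrix G with Gᵀ H₁(λ) G = B(λ, 1). -/
open Matrix

theorem transpose_mul_H1_mul_eq {R : Type*} [CommRing R] (lam x : R) :
    !![x, 1; 1, 0]ᵀ * !![0, 1; lam, 0] * !![x, 1; 1, 0] = !![(lam + 1) * x, lam; 1, 0] := by
  ext i j
  fin_cases i <;> fin_cases j <;> simp [Matrix.mul_apply, Fin.sum_univ_succ]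
  ring

theorem H1_congruent_B_general (lam : ℂ) (hm1 : lam ≠ -1) :
    ∃ G : Matrix (Fin 2) (Fin 2) ℂ, IsUnit G.det ∧
      Gᵀ * !![0, 1; lam, 0] * G = !![1, lam; 1, 0] := by
  have hlam : lam + 1 ≠ 0 := fun h => hm1 (eq_neg_of_add_eq_zero_left h)
  refine ⟨!![(lam + 1)⁻¹, 1; 1, 0], by simp [det_fin_two_of], ?_⟩
  rw [transpose_mul_H1_mul_eq, mul_inv_cancel₀ hlam]

/-- For `λ ≠ 0, 1, −1`, the matrix `H₁(λ) = !![0, 1; λ, 0]` is congruent to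
`B(λ, 1) = !![1, λ; 1, 0]`. -/
theorem H1_congruent_B (lam : ℂ) (h0 : lam ≠ 0) (h1 : lam ≠ 1) (hm1 : lam ≠ -1) :
    ∃ G : Matrix (Fin 2) (Fin 2) ℂ, IsUnit G.det ∧
      Gᵀ * !![0, 1; lam, 0] * G = !![1, lam; 1, 0] :=
  H1_congruent_B_general lam hm1
end

section
/- The matrix B(0,0) = !![1, 0; 0, 0] is congruent to diag(1,0); moreover, for every nonzero (x,y) ∈ ℂ², B(0,0) has a jump deformation to B(x,y): for every t ∈ ℂ with t ≠ 0, the matrix !![1, tx; ty, 0] is congruent to B(x,y). -/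
/-! Congruence by `diagonal ![1, t⁻¹]` divides the off-diagonal entries by `t` and the last
diagonal entry by `t ^ 2`, so it undoes the deformation `!![1, t * x; t * y, 0]` for every `t ≠ 0`. -/

open Matrix

namespace Matrix

variable {n R K : Type*} [Fintype n] [DecidableEq n]

def Congruent_s12 [CommRing R] (M N : Matrix n n R) : Prop :=
  ∃ G : Matrix n n R, IsUnit G.det ∧ Gᵀ * M * G = N

theorem Congruent_s12.refl [CommRing R] (M : Matrix n n R) : M.Congruent_s12 M :=
  ⟨1, by simp, by simp⟩

theorem diagonal_transpose_mul_mul_diagonal [CommRing R] (d : n → R) (M : Matrix n n R) :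
    (diagonal d)ᵀ * M * diagonal d = of fun i j => d i * M i j * d j := by
  ext i j
  simp [diagonal_transpose, diagonal_mul, mul_diagonal]

theorem congruent_diagonal_scale [CommRing R] (d : n → R) (hd : ∀ i, IsUnit (d i))
    (M : Matrix n n R) : M.Congruent_s12 (of fun i j => d i * M i j * d j) :=
  ⟨diagonal d, by simpa [det_diagonal, IsUnit.prod_iff] using hd,
    diagonal_transpose_mul_mul_diagonal d M⟩

theorem congruent_fin_two_scale [Field K] {t : K} (ht : t ≠ 0) (a b c d : K) :
    (!![a, t * b; t * c, t ^ 2 * d]).Congruent_s12 !![a, b; c, d] := by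
  convert congruent_diagonal_scale ![1, t⁻¹] (by simp [Fin.forall_fin_two, ht])
    !![a, t * b; t * c, t ^ 2 * d] using 1
  ext i j
  fin_cases i <;> fin_cases j <;> simp <;> field_simp

end Matrix

/-- `B(0,0) = !![1, 0; 0, 0]` is congruent to `diag(1,0)`; moreover, for every nonzero
`(x,y) ∈ ℂ²`, `B(0,0)` has a jump deformation to `B(x,y)`: for every `t ≠ 0`, the matrix
`!![1, tx; ty, 0]` is congruent to `B(x,y)`. -/
theorem B00_congruent_and_jump :
    (∃ G : Matrix (Fin 2) (Fin 2) ℂ, IsUnit G.det ∧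
      Gᵀ * !![1, 0; 0, 0] * G = Matrix.diagonal ![1, 0]) ∧
    (∀ x y : ℂ, (x, y) ≠ (0, 0) → ∀ t : ℂ, t ≠ 0 →
      ∃ G : Matrix (Fin 2) (Fin 2) ℂ, IsUnit G.det ∧
        Gᵀ * !![1, t * x; t * y, 0] * G = !![1, x; y, 0]) := by
  refine ⟨?_, fun x y _ t ht => ?_⟩
  · rw [diagonal_vec2]
    exact Matrix.Congruent_s12.refl (!![1, 0; 0, 0] : Matrix (Fin 2) (Fin 2) ℂ)
  · have h := congruent_fin_two_scale ht 1 x y 0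
    rwa [mul_zero] at h
end

section
/- The 3×3 complex matrix C₁(1,1) = !![0, 0, 1; 0, 1, 1; 1, 0, 1] is congruent to the indecomposable matrix B₆ = Γ₃ = !![0, 0, 1; 0, -1, -1; 1, 1, 0]: there exists an invertible 3×3 complex matrix G with Gᵀ C₁(1,1) G = Γ₃. -/
open Matrix

/-!
The symmetric part of `C₁(1,1)` has signature `(2,1)` while that of `Γ₃` has signature `(1,2)`,
so no real congruence exists; but `C₁(1,1)` is congruent to `-Γ₃` over `ℚ`, and scaling the
congruence matrix by `i` turns `-Γ₃` into `i² • (-Γ₃) = Γ₃`.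
-/

theorem Matrix.transpose_smul_mul_mul_smul_of_mul_self_eq_neg_one {n R : Type*} [Fintype n]
    [CommRing R] {i : R} (hi : i * i = -1) {M N H : Matrix n n R} (hH : Hᵀ * M * H = -N) :
    (i • H)ᵀ * M * (i • H) = N := by
  rw [transpose_smul, smul_mul, Matrix.mul_smul, smul_mul, hH, smul_smul, hi, neg_one_smul,
    neg_neg]

noncomputable def C1_11_toNegGamma3 : Matrix (Fin 3) (Fin 3) ℂ :=
  !![-1/2, 0, -3/4; 0, 1, -1; 0, 0, 2]

theorem det_C1_11_toNegGamma3 : C1_11_toNegGamma3.det = -1 := by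
  simp [C1_11_toNegGamma3, det_fin_three]

theorem transpose_toNegGamma3_mul_C1_11_mul_toNegGamma3 :
    C1_11_toNegGamma3ᵀ * !![0, 0, 1; 0, 1, 1; 1, 0, 1] * C1_11_toNegGamma3 =
      -!![0, 0, 1; 0, -1, -1; 1, 1, 0] := by
  ext i j
  fin_cases i <;> fin_cases j <;> norm_num [C1_11_toNegGamma3, mul_apply, Fin.sum_univ_succ]

/-- `C₁(1,1) = !![0, 0, 1; 0, 1, 1; 1, 0, 1]` is congruent to the indecomposable matrix
`Γ₃ = !![0, 0, 1; 0, -1, -1; 1, 1, 0]`. -/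
theorem C1_11_congruent_Gamma3 :
    ∃ G : Matrix (Fin 3) (Fin 3) ℂ, IsUnit G.det ∧
      Gᵀ * !![0, 0, 1; 0, 1, 1; 1, 0, 1] * G = !![0, 0, 1; 0, -1, -1; 1, 1, 0] := by
  refine ⟨Complex.I • C1_11_toNegGamma3, ?_, ?_⟩
  · rw [det_smul, det_C1_11_toNegGamma3]
    exact isUnit_iff_ne_zero.mpr (by simp)
  · exact transpose_smul_mul_mul_smul_of_mul_self_eq_neg_one Complex.I_mul_I
      transpose_toNegGamma3_mul_C1_11_mul_toNegGamma3
end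

section
/- Let γ ∈ ℂ be a primitive sixth root of unity. Then the 3×3 complex matrix C₁(0,0) = !![0, 0, 0; 0, 1, 1; 0, 0, 1] is congruent to C₅(1,γ) = !![0, 0, γ; 0, 0, 0; 1, 0, 1]: there exists an invertible 3×3 complex matrix G with Gᵀ C₁(0,0) G = C₅(1,γ). -/
/-!
A primitive sixth root of unity `γ` is a root of `Φ₆ = X² - X + 1`, so `s = γ²` satisfies
`s² + s + 1 = 0` and `s + 1 = γ`. Hence, for the bilinear form of `C₁(0,0)`, the vector
`(0, s, 1)` is isotropic and pairs with `e₃` to `γ` one way and to `1` the other, while `e₁`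
spans the radical; in the basis `(0, s, 1), e₁, e₃` the form has matrix `C₅(1,γ)`.
-/

open Matrix Polynomial

theorem IsPrimitiveRoot.sq_sub_self_add_one_eq_zero {R : Type*} [CommRing R] [IsDomain R] {γ : R}
    (hγ : IsPrimitiveRoot γ 6) : γ ^ 2 - γ + 1 = 0 := by
  simpa [cyclotomic_six] using (hγ.isRoot_cyclotomic (by norm_num)).eq_zero

section CongruenceMatrix

variable {R : Type*} [CommRing R]

def congruenceMatrix (s : R) : Matrix (Fin 3) (Fin 3) R :=
  !![0, 1, 0; s, 0, 0; 1, 0, 1]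

theorem det_congruenceMatrix (s : R) : (congruenceMatrix s).det = -s := by
  simp [congruenceMatrix, det_fin_three]

theorem transpose_congruenceMatrix_mul_mul (s : R) :
    (congruenceMatrix s)ᵀ * !![0, 0, 0; 0, 1, 1; 0, 0, 1] * congruenceMatrix s =
      !![s ^ 2 + s + 1, 0, s + 1; 0, 0, 0; 1, 0, 1] := by
  ext i j
  fin_cases i <;> fin_cases j <;>
    simp [congruenceMatrix, mul_apply, Fin.sum_univ_succ, sq, add_assoc]

end CongruenceMatrix

/-- If `γ` is a primitive sixth root of unity, then
`C₁(0,0) = !![0, 0, 0; 0, 1, 1; 0, 0, 1]` is congruent to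
`C₅(1,γ) = !![0, 0, γ; 0, 0, 0; 1, 0, 1]`. -/
theorem C1_00_congruent_C5_one_gamma (γ : ℂ) (hγ : IsPrimitiveRoot γ 6) :
    ∃ G : Matrix (Fin 3) (Fin 3) ℂ, IsUnit G.det ∧
      Gᵀ * !![0, 0, 0; 0, 1, 1; 0, 0, 1] * G = !![0, 0, γ; 0, 0, 0; 1, 0, 1] := by
  have hγ₂ := hγ.sq_sub_self_add_one_eq_zero
  have hsq : (γ ^ 2) ^ 2 + γ ^ 2 + 1 = 0 := by linear_combination (γ ^ 2 + γ + 1) * hγ₂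
  have hlin : γ ^ 2 + 1 = γ := by linear_combination hγ₂
  refine ⟨congruenceMatrix (γ ^ 2), ?_, ?_⟩
  · rw [det_congruenceMatrix, isUnit_iff_ne_zero, neg_ne_zero]
    exact pow_ne_zero 2 (hγ.ne_zero (by norm_num))
  · rw [transpose_congruenceMatrix_mul_mul, hsq, hlin]
end

section
/- For all p, q ∈ ℂ, the 3×3 complex matrix C₅(p,q) = !![0, 0, q; 0, 0, 0; p, 0, 1] is congruent to B₂(p,q) = !![1, p, 0; q, 0, 0; 0, 0, 0] (the family C₅ is pointwise equivalent to the family B₂), and moreover C₅(p,q) is congruent to C₅(q,p), so the stratum C₅(p:q) is parametrized by ℙ¹/Σ₂. -/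
open Matrix

namespace Matrix

variable {n R : Type*} [Fintype n] [DecidableEq n] [CommRing R]

def IsCongruent (M N : Matrix n n R) : Prop :=
  ∃ G : Matrix n n R, IsUnit G.det ∧ Gᵀ * M * G = N

theorem isCongruent_submatrix_perm (M : Matrix n n R) (σ : Equiv.Perm n) :
    IsCongruent M (M.submatrix σ σ) := by
  refine ⟨σ⁻¹.permMatrix R, ?_, ?_⟩
  · rw [det_permutation]
    exact (Equiv.Perm.sign σ⁻¹).isUnit.map (Int.castRingHom R)
  rw [transpose_permMatrix, inv_inv, PEquiv.toMatrix_toPEquiv_mul, PEquiv.mul_toMatrix_toPEquiv]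
  rfl

end Matrix

variable {R : Type*} [CommRing R]

theorem c5_submatrix_finRotate_symm (p q : R) :
    (!![0, 0, q; 0, 0, 0; p, 0, 1] : Matrix (Fin 3) (Fin 3) R).submatrix
      (finRotate 3).symm (finRotate 3).symm = !![1, p, 0; q, 0, 0; 0, 0, 0] := by
  ext i j
  fin_cases i <;> fin_cases j <;> rfl

/- The witness fixes `e₁, e₂` and sends `e₀` to `f = (p + q) e₂ - e₀`, for which
`fᵀ C₅ f = 0`, `fᵀ C₅ e₂ = p` and `e₂ᵀ C₅ f = q`. -/
theorem c5_isCongruent_swap (p q : R) :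
    IsCongruent !![0, 0, q; 0, 0, 0; p, 0, 1] !![0, 0, p; 0, 0, 0; q, 0, 1] := by
  refine ⟨!![-1, 0, 0; 0, 1, 0; p + q, 0, 1], by simp [det_fin_three], ?_⟩
  ext i j
  fin_cases i <;> fin_cases j <;> simp [mul_apply, Fin.sum_univ_three]
  ring

/-- The family `C₅(p,q) = !![0, 0, q; 0, 0, 0; p, 0, 1]` is pointwise congruent to the family
`B₂(p,q) = !![1, p, 0; q, 0, 0; 0, 0, 0]`, and moreover `C₅(p,q)` is congruent to `C₅(q,p)`,
so the stratum `C₅(p:q)` is parametrized by `ℙ¹/Σ₂`. -/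
theorem C5_congruent_B2_and_swap (p q : ℂ) :
    (∃ G : Matrix (Fin 3) (Fin 3) ℂ, IsUnit G.det ∧
      Gᵀ * !![0, 0, q; 0, 0, 0; p, 0, 1] * G = !![1, p, 0; q, 0, 0; 0, 0, 0]) ∧
    (∃ G : Matrix (Fin 3) (Fin 3) ℂ, IsUnit G.det ∧
      Gᵀ * !![0, 0, q; 0, 0, 0; p, 0, 1] * G = !![0, 0, p; 0, 0, 0; q, 0, 1]) :=
  ⟨c5_submatrix_finRotate_symm p q ▸ isCongruent_submatrix_perm _ _, c5_isCongruent_swap p q⟩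
end

section
/- The 3×3 complex matrix C₃ = !![0, 1, 1; -1, 0, 0; 0, 0, 0] is congruent to B₅ = J₃(0) = !![0, 1, 0; 0, 0, 1; 0, 0, 0], and the matrix C₂ = !![0, 1, 0; -1, 0, 0; 0, 0, 1] is congruent to B₃ = !![0, -1, 0; 1, 0, 0; 0, 0, 1]: in each case there exists an invertible 3×3 complex matrix G carrying out the congruence Gᵀ M G = N. -/
open Matrix

def Matrix.IsCongruent_s18 {n R : Type*} [Fintype n] [DecidableEq n] [CommRing R]
    (M N : Matrix n n R) : Prop :=
  ∃ G : Matrix n n R, IsUnit G.det ∧ Gᵀ * M * G = N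

/- The columns `g₁ = (0, -1, 1)`, `g₂ = (1, 0, 0)`, `g₃ = (0, 0, 1)` of the witness satisfy
`gᵢᵀ C₃ gⱼ = 1` for `(i, j) = (1, 2), (2, 3)` and `0` otherwise. -/
theorem isCongruent_C3_B5 :
    IsCongruent_s18 (!![0, 1, 1; -1, 0, 0; 0, 0, 0] : Matrix (Fin 3) (Fin 3) ℂ)
      !![0, 1, 0; 0, 0, 1; 0, 0, 0] := by
  refine ⟨!![0, 1, 0; -1, 0, 0; 1, 0, 1], by simp [det_fin_three], ?_⟩
  ext i j
  fin_cases i <;> fin_cases j <;> simp [mul_apply, Fin.sum_univ_three]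

/- Congruence by `diag(1, -1, 1)` negates the skew-symmetric `2 × 2` block. -/
theorem isCongruent_C2_B3 :
    IsCongruent_s18 (!![0, 1, 0; -1, 0, 0; 0, 0, 1] : Matrix (Fin 3) (Fin 3) ℂ)
      !![0, -1, 0; 1, 0, 0; 0, 0, 1] := by
  refine ⟨!![1, 0, 0; 0, -1, 0; 0, 0, 1], by simp [det_fin_three], ?_⟩
  ext i j
  fin_cases i <;> fin_cases j <;> simp [mul_apply, Fin.sum_univ_three]

/-- `C₃ = !![0, 1, 1; -1, 0, 0; 0, 0, 0]` is congruent to `B₅ = J₃(0) = !![0, 1, 0; 0, 0, 1; 0, 0, 0]`,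
and `C₂ = !![0, 1, 0; -1, 0, 0; 0, 0, 1]` is congruent to `B₃ = !![0, -1, 0; 1, 0, 0; 0, 0, 1]`. -/
theorem C3_congruent_B5_and_C2_congruent_B3 :
    (∃ G : Matrix (Fin 3) (Fin 3) ℂ, IsUnit G.det ∧
      Gᵀ * !![0, 1, 1; -1, 0, 0; 0, 0, 0] * G = !![0, 1, 0; 0, 0, 1; 0, 0, 0]) ∧
    (∃ G : Matrix (Fin 3) (Fin 3) ℂ, IsUnit G.det ∧
      Gᵀ * !![0, 1, 0; -1, 0, 0; 0, 0, 1] * G = !![0, -1, 0; 1, 0, 0; 0, 0, 1]) :=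
  ⟨isCongruent_C3_B5, isCongruent_C2_B3⟩
end

section
/- (Arnold) Let A be a complex square matrix in Jordan normal form: A is the block-diagonal matrix whose blocks are Jordan blocks J_{n_{λ,k}}(λ), where λ ranges over the (distinct) eigenvalues of A and, for each eigenvalue λ, the block sizes satisfy n_{λ,1} ≥ n_{λ,2} ≥ ⋯ ≥ n_{λ,r(λ)} ≥ 1. Then the dimension over ℂ of the centralizer of A, i.e. of the subspace {B : A·B = B·A} of square matrices, equals Σ_λ (n_{λ,1} + 3·n_{λ,2} + 5·n_{λ,3} + ⋯) = Σ_λ Σ_{k=1}^{r(λ)} (2k−1)·n_{λ,k}; this number is the number of parameters in a miniversal deformation of A under the conjugation action of GL(n, ℂ). -/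
/-!
Splitting a matrix into the blocks of `A = diag(J_{n_i}(λ_i))` turns the centralizer of `A` into
the direct sum, over ordered pairs of Jordan blocks, of the solution spaces of
`J_a(λ) X = X J_b(μ)`. The operator `X ↦ J_a(λ) X - X J_b(μ)` is `(λ - μ)` plus a nilpotent
operator commuting with it, so for `λ ≠ μ` only `X = 0` solves it. For `λ = μ` the solutions are
the Toeplitz matrices supported on the last `min a b` superdiagonals, a space of dimension
`min a b`. Within one eigenvalue with nonincreasing sizes, `min (n_k) (n_k') = n_{max k k'}`, and
exactly `2t + 1` pairs `(k, k')` have `max k k' = t`.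
-/

open Matrix

def jordanBlock (m : ℕ) (lam : ℂ) : Matrix (Fin m) (Fin m) ℂ :=
  Matrix.of fun i j => if i = j then lam else if (i : ℕ) + 1 = (j : ℕ) then 1 else 0

theorem LinearEquiv.finrank_ker_eq_of_comp_eq {R M N : Type*} [Ring R] [AddCommGroup M]
    [Module R M] [AddCommGroup N] [Module R N] (e : M ≃ₗ[R] N) {f : Module.End R M}
    {g : Module.End R N} (h : e.toLinearMap ∘ₗ f = g ∘ₗ e.toLinearMap) :
    Module.finrank R (LinearMap.ker f) = Module.finrank R (LinearMap.ker g) := by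
  have hker : LinearMap.ker f = (LinearMap.ker g).comap e.toLinearMap := by
    rw [← LinearMap.ker_comp, ← h, LinearEquiv.ker_comp]
  rw [hker, (e.ofSubmodule' _).finrank_eq]

def LinearMap.kerPiMapEquiv {R ι : Type*} [Semiring R] {M N : ι → Type*}
    [∀ i, AddCommMonoid (M i)] [∀ i, Module R (M i)] [∀ i, AddCommMonoid (N i)]
    [∀ i, Module R (N i)] (f : ∀ i, M i →ₗ[R] N i) :
    LinearMap.ker (LinearMap.piMap f) ≃ₗ[R] ∀ i, LinearMap.ker (f i) where
  toFun x i := ⟨x.1 i, congr_fun (LinearMap.mem_ker.mp x.2) i⟩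
  invFun y := ⟨fun i => y i, LinearMap.mem_ker.mpr (funext fun i => (y i).2)⟩
  map_add' _ _ := rfl
  map_smul' _ _ := rfl
  left_inv _ := rfl
  right_inv _ := rfl

theorem LinearMap.finrank_ker_piMap {K ι : Type*} [Field K] [Fintype ι] {M N : ι → Type*}
    [∀ i, AddCommGroup (M i)] [∀ i, Module K (M i)] [∀ i, FiniteDimensional K (M i)]
    [∀ i, AddCommGroup (N i)] [∀ i, Module K (N i)] (f : ∀ i, M i →ₗ[K] N i) :
    Module.finrank K (LinearMap.ker (LinearMap.piMap f)) =
      ∑ i, Module.finrank K (LinearMap.ker (f i)) := by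
  rw [(LinearMap.kerPiMapEquiv f).finrank_eq, Module.finrank_pi_fintype]

theorem Finset.sum_range_sum_range_max {M : Type*} [AddCommMonoid M] (g : ℕ → M) (r : ℕ) :
    ∑ k ∈ range r, ∑ k' ∈ range r, g (max k k') = ∑ t ∈ range r, (2 * t + 1) • g t := by
  induction r with
  | zero => simp
  | succ r ih =>
    have hrow : ∀ k ∈ range r, g (max k r) = g r := fun k hk => by
      rw [max_eq_right (mem_range.mp hk).le]
    have hcol : ∀ k ∈ range r, g (max r k) = g r := fun k hk => by
      rw [max_eq_left (mem_range.mp hk).le]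
    simp only [sum_range_succ, sum_add_distrib, ih, sum_congr rfl hrow, sum_congr rfl hcol,
      sum_const, card_range, max_self]
    rw [two_mul, add_smul, add_smul, one_smul]
    abel

theorem Fin.sum_univ_sum_univ_min_of_antitoneOn {M : Type*} [AddCommMonoid M] [LinearOrder M]
    {f : ℕ → M} {r : ℕ} (hf : AntitoneOn f (Set.Iio r)) :
    ∑ k : Fin r, ∑ k' : Fin r, min (f k) (f k') = ∑ k ∈ Finset.range r, (2 * k + 1) • f k := by
  rw [Fin.sum_univ_eq_sum_range (fun k => ∑ k' : Fin r, min (f k) (f k'))]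
  rw [Finset.sum_congr rfl fun k _ => Fin.sum_univ_eq_sum_range (fun k' => min (f k) (f k')) r]
  rw [← Finset.sum_range_sum_range_max]
  refine Finset.sum_congr rfl fun k hk => Finset.sum_congr rfl fun k' hk' => ?_
  exact (hf.map_max (Finset.mem_range.mp hk) (Finset.mem_range.mp hk')).symm

theorem Fintype.sum_sigma_prod_ite_fst_eq {α : Type*} [Fintype α] [DecidableEq α]
    {β : α → Type*} [∀ a, Fintype (β a)] {M : Type*} [AddCommMonoid M]
    (g : (Σ a, β a) → (Σ a, β a) → M) :
    ∑ p : (Σ a, β a) × (Σ a, β a), (if p.1.1 = p.2.1 then g p.1 p.2 else 0) =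
      ∑ a, ∑ b, ∑ b', g ⟨a, b⟩ ⟨a, b'⟩ := by
  rw [Fintype.sum_prod_type, Fintype.sum_sigma]
  refine Finset.sum_congr rfl fun a _ => Finset.sum_congr rfl fun b _ => ?_
  rw [Fintype.sum_sigma, Fintype.sum_eq_single a fun a' ha' =>
    Finset.sum_eq_zero fun b' _ => if_neg (Ne.symm ha')]
  exact Finset.sum_congr rfl fun b' _ => if_pos rfl

namespace Matrix

theorem pow_mul_eq_mul_pow_of_mul_eq_mul {R l m : Type*} [Semiring R] [Fintype l] [Fintype m]
    [DecidableEq l] [DecidableEq m] {a : Matrix l l R} {b : Matrix m m R} {x : Matrix l m R}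
    (h : a * x = x * b) (k : ℕ) : a ^ k * x = x * b ^ k := by
  induction k with
  | zero => simp
  | succ k ih =>
    rw [pow_succ, Matrix.mul_assoc, h, ← Matrix.mul_assoc, ih, Matrix.mul_assoc, pow_succ]

section SylvesterMap

variable {R : Type*} [CommRing R] {l m : Type*} [Fintype l] [Fintype m] [DecidableEq l]
  [DecidableEq m]

abbrev sylvesterMap (a : Matrix l l R) (b : Matrix m m R) : Module.End R (Matrix l m R) :=
  mulLeftLinearMap m R a - mulRightLinearMap l R b

omit [DecidableEq l] [DecidableEq m] in
theorem mem_ker_sylvesterMap {a : Matrix l l R} {b : Matrix m m R} {x : Matrix l m R} :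
    x ∈ LinearMap.ker (sylvesterMap a b) ↔ a * x = x * b := by
  simp [sub_eq_zero]

theorem isNilpotent_sylvesterMap {a : Matrix l l R} {b : Matrix m m R} (ha : IsNilpotent a)
    (hb : IsNilpotent b) : IsNilpotent (sylvesterMap a b) := by
  obtain ⟨p, hp⟩ := ha
  obtain ⟨q, hq⟩ := hb
  have hcomm : Commute (mulLeftLinearMap m R a) (mulRightLinearMap l R b) :=
    commute_mulLeftLinearMap_mulRightLinearMap a b
  refine hcomm.isNilpotent_sub ⟨p, ?_⟩ ⟨q, ?_⟩
  · rw [pow_mulLeftLinearMap, hp, mulLeftLinearMap_zero_eq_zero]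
  · rw [pow_mulRightLinearMap, hq, mulRightLinearMap_zero_eq_zero]

theorem sylvesterMap_add_smul_one (a : Matrix l l R) (b : Matrix m m R) (x y : R) :
    sylvesterMap (a + x • 1) (b + y • 1) = sylvesterMap a b + (x - y) • 1 := by
  ext1 c
  simp only [LinearMap.sub_apply, LinearMap.add_apply, mulLeftLinearMap_apply,
    mulRightLinearMap_apply, Matrix.add_mul, Matrix.mul_add, Matrix.smul_mul, Matrix.mul_smul,
    Matrix.one_mul, Matrix.mul_one, LinearMap.smul_apply, Module.End.one_apply, sub_smul]
  abel

theorem ker_sylvesterMap_add_smul_one_eq_bot {a : Matrix l l R} {b : Matrix m m R} {x y : R}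
    (ha : IsNilpotent a) (hb : IsNilpotent b) (hxy : IsUnit (x - y)) :
    LinearMap.ker (sylvesterMap (a + x • 1) (b + y • 1)) = ⊥ := by
  have hunit : IsUnit (sylvesterMap (a + x • 1) (b + y • 1)) := by
    rw [sylvesterMap_add_smul_one, ← Algebra.algebraMap_eq_smul_one]
    exact (isNilpotent_sylvesterMap ha hb).isUnit_add_right_of_commute (hxy.map _)
      (Algebra.commute_algebraMap_right _ _)
  exact LinearMap.ker_eq_bot.mpr (Module.End.isUnit_iff _ |>.mp hunit).injective

end SylvesterMap

section BlockDiagonal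

variable (R : Type*) [CommRing R] {ι : Type*} (d : ι → Type*)

def blocksLinearEquiv :
    Matrix (Σ i, d i) (Σ i, d i) R ≃ₗ[R] Π p : ι × ι, Matrix (d p.1) (d p.2) R where
  toFun B p := of fun a b => B ⟨p.1, a⟩ ⟨p.2, b⟩
  invFun F := of fun x y => F (x.1, y.1) x.2 y.2
  map_add' _ _ := rfl
  map_smul' _ _ := rfl
  left_inv _ := rfl
  right_inv _ := rfl

variable {R d}

@[simp]
theorem blocksLinearEquiv_apply (B : Matrix (Σ i, d i) (Σ i, d i) R) (p : ι × ι)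
    (a : d p.1) (b : d p.2) : blocksLinearEquiv R d B p a b = B ⟨p.1, a⟩ ⟨p.2, b⟩ :=
  rfl

variable [Fintype ι] [DecidableEq ι] [∀ i, Fintype (d i)]

theorem blocksLinearEquiv_blockDiagonal'_mul (D : ∀ i, Matrix (d i) (d i) R)
    (B : Matrix (Σ i, d i) (Σ i, d i) R) (p : ι × ι) :
    blocksLinearEquiv R d (blockDiagonal' D * B) p = D p.1 * blocksLinearEquiv R d B p := by
  ext a b
  simp [Matrix.mul_apply, Fintype.sum_sigma, blockDiagonal'_apply]

theorem blocksLinearEquiv_mul_blockDiagonal' (D : ∀ i, Matrix (d i) (d i) R)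
    (B : Matrix (Σ i, d i) (Σ i, d i) R) (p : ι × ι) :
    blocksLinearEquiv R d (B * blockDiagonal' D) p = blocksLinearEquiv R d B p * D p.2 := by
  ext a b
  simp [Matrix.mul_apply, Fintype.sum_sigma, blockDiagonal'_apply]

theorem finrank_ker_sylvesterMap_blockDiagonal' {K : Type*} [Field K] [∀ i, DecidableEq (d i)]
    (D : ∀ i, Matrix (d i) (d i) K) :
    Module.finrank K (LinearMap.ker (sylvesterMap (blockDiagonal' D) (blockDiagonal' D))) =
      ∑ p : ι × ι, Module.finrank K (LinearMap.ker (sylvesterMap (D p.1) (D p.2))) := by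
  rw [(blocksLinearEquiv K d).finrank_ker_eq_of_comp_eq
    (g := LinearMap.piMap fun p : ι × ι => sylvesterMap (D p.1) (D p.2)),
    LinearMap.finrank_ker_piMap]
  ext B : 1
  funext p
  simp [blocksLinearEquiv_blockDiagonal'_mul, blocksLinearEquiv_mul_blockDiagonal']

end BlockDiagonal

end Matrix

theorem jordanBlock_zero_apply (m : ℕ) (i j : Fin m) :
    jordanBlock m 0 i j = if (i : ℕ) + 1 = j then 1 else 0 := by
  by_cases h : i = j <;> simp [jordanBlock, h]

theorem jordanBlock_eq_add_smul_one (m : ℕ) (lam : ℂ) :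
    jordanBlock m lam = jordanBlock m 0 + lam • 1 := by
  ext i j
  by_cases h : i = j <;> simp [jordanBlock, h]

theorem jordanBlock_zero_mul_apply {n : ℕ} {α : Type*} (X : Matrix (Fin n) α ℂ) (i : Fin n)
    (j : α) : (jordanBlock n 0 * X) i j = if h : (i : ℕ) + 1 < n then X ⟨i + 1, h⟩ j else 0 := by
  simp only [Matrix.mul_apply, jordanBlock_zero_apply, ite_mul, one_mul, zero_mul]
  split_ifs with h
  · rw [Fintype.sum_eq_single ⟨i + 1, h⟩ fun b hb => if_neg fun hb' => hb (Fin.ext hb'.symm),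
      if_pos rfl]
  · exact Finset.sum_eq_zero fun b _ => if_neg (by omega)

theorem mul_jordanBlock_zero_apply {m : ℕ} {α : Type*} (X : Matrix α (Fin m) ℂ) (i : α)
    (j : Fin m) : (X * jordanBlock m 0) i j = if 0 < (j : ℕ) then X i ⟨j - 1, by omega⟩ else 0 := by
  simp only [Matrix.mul_apply, jordanBlock_zero_apply, mul_ite, mul_one, mul_zero]
  split_ifs with h
  · rw [Fintype.sum_eq_single ⟨j - 1, by omega⟩
      fun b hb => if_neg fun hb' => hb (Fin.ext (by simp; omega)), if_pos (by simp; omega)]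
  · exact Finset.sum_eq_zero fun b _ => if_neg (by omega)

theorem jordanBlock_zero_pow_mul_apply {n : ℕ} {α : Type*} (X : Matrix (Fin n) α ℂ) (k : ℕ)
    (i : Fin n) (j : α) :
    (jordanBlock n 0 ^ k * X) i j = if h : (i : ℕ) + k < n then X ⟨i + k, h⟩ j else 0 := by
  induction k generalizing X with
  | zero => simp
  | succ k ih =>
    simp only [pow_succ, Matrix.mul_assoc, ih, jordanBlock_zero_mul_apply]
    split_ifs <;> first | rfl | omega

theorem mul_jordanBlock_zero_pow_apply {m : ℕ} {α : Type*} (X : Matrix α (Fin m) ℂ) (k : ℕ)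
    (i : α) (j : Fin m) :
    (X * jordanBlock m 0 ^ k) i j = if k ≤ (j : ℕ) then X i ⟨j - k, by omega⟩ else 0 := by
  induction k generalizing X with
  | zero => simp
  | succ k ih =>
    simp only [pow_succ', ← Matrix.mul_assoc, ih, mul_jordanBlock_zero_apply]
    split_ifs <;> first | rfl | omega

theorem isNilpotent_jordanBlock_zero (m : ℕ) : IsNilpotent (jordanBlock m 0) := by
  refine ⟨m, ?_⟩
  ext i j
  rw [← Matrix.mul_one (jordanBlock m 0 ^ m), jordanBlock_zero_pow_mul_apply, dif_neg (by omega),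
    Matrix.zero_apply]

section Intertwiner

variable {n m : ℕ} {X : Matrix (Fin n) (Fin m) ℂ}

theorem apply_eq_of_jordanBlock_zero_mul_eq (hX : jordanBlock n 0 * X = X * jordanBlock m 0)
    (i : Fin n) (j : Fin m) :
    X i j = if (i : ℕ) ≤ j then X ⟨0, i.pos⟩ ⟨j - i, (j.val.sub_le i).trans_lt j.2⟩ else 0 := by
  have := congr_fun₂ (pow_mul_eq_mul_pow_of_mul_eq_mul hX i) ⟨0, i.pos⟩ j
  rw [jordanBlock_zero_pow_mul_apply, mul_jordanBlock_zero_pow_apply, dif_pos (by simp)] at this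
  simpa using this

theorem apply_zero_eq_zero_of_jordanBlock_zero_mul_eq
    (hX : jordanBlock n 0 * X = X * jordanBlock m 0) (hn : 0 < n) (d : ℕ) (hd : d + n < m) :
    X ⟨0, hn⟩ ⟨d, by omega⟩ = 0 := by
  have := congr_fun₂ (pow_mul_eq_mul_pow_of_mul_eq_mul hX n) ⟨0, hn⟩ ⟨d + n, hd⟩
  rw [jordanBlock_zero_pow_mul_apply, mul_jordanBlock_zero_pow_apply, dif_neg (by simp),
    if_pos (by simp)] at this
  simpa using this.symm

end Intertwiner

def nilpotentToeplitz (n m : ℕ) : (Fin (min n m) → ℂ) →ₗ[ℂ] Matrix (Fin n) (Fin m) ℂ where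
  toFun c := of fun i j =>
    if m - min n m + i ≤ j then c ⟨j - i - (m - min n m), by have := j.2; omega⟩ else 0
  map_add' c c' := by
    ext i j; simp only [of_apply, Matrix.add_apply, Pi.add_apply]; split_ifs <;> simp
  map_smul' a c := by
    ext i j; simp only [of_apply, Matrix.smul_apply, Pi.smul_apply]; split_ifs <;> simp

theorem nilpotentToeplitz_apply (n m : ℕ) (c : Fin (min n m) → ℂ) (i : Fin n) (j : Fin m) :
    nilpotentToeplitz n m c i j =
      if m - min n m + i ≤ j then c ⟨j - i - (m - min n m), by have := j.2; omega⟩ else 0 :=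
  rfl

theorem nilpotentToeplitz_injective (n m : ℕ) : Function.Injective (nilpotentToeplitz n m) := by
  intro c c' h
  ext t
  have := congr_fun₂ h ⟨0, by have := t.2; omega⟩ ⟨m - min n m + t, by have := t.2; omega⟩
  simpa [nilpotentToeplitz_apply] using this

theorem nilpotentToeplitz_mem_ker (n m : ℕ) (c : Fin (min n m) → ℂ) :
    nilpotentToeplitz n m c ∈
      LinearMap.ker (sylvesterMap (jordanBlock n 0) (jordanBlock m 0)) := by
  rw [mem_ker_sylvesterMap]
  ext i j
  simp only [jordanBlock_zero_mul_apply, mul_jordanBlock_zero_apply, nilpotentToeplitz_apply]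
  split_ifs <;> first | rfl | omega | (congr 1; ext; simp; omega)

theorem ker_sylvesterMap_jordanBlock_zero (n m : ℕ) :
    LinearMap.ker (sylvesterMap (jordanBlock n 0) (jordanBlock m 0)) =
      LinearMap.range (nilpotentToeplitz n m) := by
  refine le_antisymm (fun X hX => ?_) (LinearMap.range_le_iff_comap.mpr ?_)
  · rw [mem_ker_sylvesterMap] at hX
    refine ⟨fun t => X ⟨0, by have := t.2; omega⟩ ⟨m - min n m + t, by have := t.2; omega⟩, ?_⟩
    ext i j
    rw [nilpotentToeplitz_apply, apply_eq_of_jordanBlock_zero_mul_eq hX i j]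
    by_cases hij : (i : ℕ) ≤ j
    · by_cases hband : m - min n m + i ≤ j
      · rw [if_pos hband, if_pos hij]
        congr 1; ext; simp; omega
      · rw [if_neg hband, if_pos hij]
        exact (apply_zero_eq_zero_of_jordanBlock_zero_mul_eq hX i.pos (j - i) (by omega)).symm
    · rw [if_neg (by omega), if_neg hij]
  · ext c
    simpa using nilpotentToeplitz_mem_ker n m c

theorem finrank_ker_sylvesterMap_jordanBlock (n m : ℕ) (lam mu : ℂ) :
    Module.finrank ℂ (LinearMap.ker (sylvesterMap (jordanBlock n lam) (jordanBlock m mu))) =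
      if lam = mu then min n m else 0 := by
  rw [jordanBlock_eq_add_smul_one n, jordanBlock_eq_add_smul_one m]
  split_ifs with h
  · rw [h, sylvesterMap_add_smul_one, sub_self, zero_smul, add_zero,
      ker_sylvesterMap_jordanBlock_zero,
      LinearMap.finrank_range_of_inj (nilpotentToeplitz_injective n m), Module.finrank_fin_fun]
  · rw [ker_sylvesterMap_add_smul_one_eq_bot (isNilpotent_jordanBlock_zero n)
      (isNilpotent_jordanBlock_zero m) (sub_ne_zero.mpr h).isUnit, finrank_bot]

theorem arnold_centralizer_dimension_general
    (Λ : Finset ℂ) (r : ℂ → ℕ) (n : ℂ → ℕ → ℕ)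
    (hmono : ∀ l ∈ Λ, ∀ j k, j ≤ k → k < r l → n l k ≤ n l j)
    (A : Matrix (Σ i : (Σ l : Λ, Fin (r l.1)), Fin (n i.1.1 i.2.1))
                (Σ i : (Σ l : Λ, Fin (r l.1)), Fin (n i.1.1 i.2.1)) ℂ)
    (hA : A = Matrix.blockDiagonal'
      (fun i : (Σ l : Λ, Fin (r l.1)) => jordanBlock (n i.1.1 i.2.1) i.1.1)) :
    Module.finrank ℂ
      (LinearMap.ker (LinearMap.mulLeft ℂ A - LinearMap.mulRight ℂ A)) =
    ∑ l ∈ Λ, ∑ k ∈ Finset.range (r l), (2 * k + 1) * n l k := by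
  rw [show LinearMap.mulLeft ℂ A - LinearMap.mulRight ℂ A = sylvesterMap A A from rfl, hA]
  simp only [finrank_ker_sylvesterMap_blockDiagonal', finrank_ker_sylvesterMap_jordanBlock,
    Subtype.coe_inj]
  rw [Fintype.sum_sigma_prod_ite_fst_eq
      (fun i j : Σ l : Λ, Fin (r l) => min (n i.1 i.2) (n j.1 j.2)),
    ← Finset.sum_coe_sort Λ]
  refine Fintype.sum_congr _ _ fun l => ?_
  simpa only [smul_eq_mul] using
    Fin.sum_univ_sum_univ_min_of_antitoneOn fun j _ k hk hjk => hmono l l.2 j k hjk hk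

/-- (Arnold) Let `A` be the block-diagonal matrix whose blocks are the Jordan blocks
`J_{n l k}(l)` for `l` ranging over a finite set `Λ` of (distinct) eigenvalues and, for each
`l ∈ Λ`, block sizes `n l 0 ≥ n l 1 ≥ ⋯ ≥ n l (r l − 1) ≥ 1`. Then the dimension over `ℂ` of
the centralizer `{B : A·B = B·A}` equals `Σ_l Σ_{k<r l} (2k+1)·(n l k)`, i.e.
`Σ_l (n_{l,1} + 3 n_{l,2} + 5 n_{l,3} + ⋯)`; this is the number of parameters in a miniversal
deformation of `A` under the conjugation action of `GL(n, ℂ)`. -/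
theorem arnold_centralizer_dimension
    (Λ : Finset ℂ) (r : ℂ → ℕ) (n : ℂ → ℕ → ℕ)
    (hpos : ∀ l ∈ Λ, ∀ k < r l, 1 ≤ n l k)
    (hmono : ∀ l ∈ Λ, ∀ j k, j ≤ k → k < r l → n l k ≤ n l j)
    (A : Matrix (Σ i : (Σ l : Λ, Fin (r l.1)), Fin (n i.1.1 i.2.1))
                (Σ i : (Σ l : Λ, Fin (r l.1)), Fin (n i.1.1 i.2.1)) ℂ)
    (hA : A = Matrix.blockDiagonal'
      (fun i : (Σ l : Λ, Fin (r l.1)) => jordanBlock (n i.1.1 i.2.1) i.1.1)) :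
    Module.finrank ℂ
      (LinearMap.ker (LinearMap.mulLeft ℂ A - LinearMap.mulRight ℂ A)) =
    ∑ l ∈ Λ, ∑ k ∈ Finset.range (r l), (2 * k + 1) * n l k :=
  arnold_centralizer_dimension_general Λ r n hmono A hA
end
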